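/- arXiv:1809.09542 — 2 statements merged into one kernel-verified Lean document; each statement's English description precedes it below -/
import Mathlib

section
/- There is no decomposition of (n,s) = (6,7) as (n₁+n₂, s₁+s₂) with nonnegative integers satisfying nᵢ + 2sᵢ ≡ 0 (mod 10) with nᵢ + 2sᵢ > 0 and sᵢ ≤ 2nᵢ − 5 for i = 1,2. -/
/-! The bounds `0 ≤ sᵢ ≤ 2nᵢ − 5` force `nᵢ ≥ 3`, hence `n₁ = n₂ = 3`, and then `s₁ + s₂ ≤ 1 + 1 < 7`. -/

lemma three_le_of_nonneg_of_le_two_mul_sub_five {n s : ℤ} (hs : 0 ≤ s) (h : s ≤ 2 * n - 5) :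
    3 ≤ n := by
  omega

theorem stmt_17 :
    ¬ ∃ n₁ s₁ n₂ s₂ : ℤ, 0 ≤ n₁ ∧ 0 ≤ s₁ ∧ 0 ≤ n₂ ∧ 0 ≤ s₂ ∧
      n₁ + n₂ = 6 ∧ s₁ + s₂ = 7 ∧
      (10 : ℤ) ∣ n₁ + 2 * s₁ ∧ (10 : ℤ) ∣ n₂ + 2 * s₂ ∧
      0 < n₁ + 2 * s₁ ∧ 0 < n₂ + 2 * s₂ ∧
      s₁ ≤ 2 * n₁ - 5 ∧ s₂ ≤ 2 * n₂ - 5 := by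
  rintro ⟨n₁, s₁, n₂, s₂, -, hs₁, -, hs₂, hn, hs, -, -, -, -, h₁, h₂⟩
  have hn₁ := three_le_of_nonneg_of_le_two_mul_sub_five hs₁ h₁
  have hn₂ := three_le_of_nonneg_of_le_two_mul_sub_five hs₂ h₂
  obtain ⟨rfl, rfl⟩ : n₁ = 3 ∧ n₂ = 3 := by omega
  omega
end

section
/- There is no decomposition of (n,s) = (8,11) as (n₁+n₂, s₁+s₂) with nonnegative integers satisfying nᵢ + 2sᵢ ≡ 0 (mod 10) with nᵢ + 2sᵢ > 0 and sᵢ ≤ 2nᵢ − 5 for i = 1,2. -/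
theorem stmt_18 :
    ¬ ∃ n₁ s₁ n₂ s₂ : ℤ, 0 ≤ n₁ ∧ 0 ≤ s₁ ∧ 0 ≤ n₂ ∧ 0 ≤ s₂ ∧
      n₁ + n₂ = 8 ∧ s₁ + s₂ = 11 ∧
      (10 : ℤ) ∣ n₁ + 2 * s₁ ∧ (10 : ℤ) ∣ n₂ + 2 * s₂ ∧
      0 < n₁ + 2 * s₁ ∧ 0 < n₂ + 2 * s₂ ∧
      s₁ ≤ 2 * n₁ - 5 ∧ s₂ ≤ 2 * n₂ - 5 := by
  rintro ⟨n₁, s₁, n₂, s₂, -, -, -, -, hn, hs, -, -, -, -, hs₁, hs₂⟩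
  -- Adding the two slope bounds: 11 = s₁ + s₂ ≤ 2 (n₁ + n₂) - 10 = 6.
  linarith
end
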